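/- Let G act faithfully and primitively on a set X with |X| ≥ 2. If M₁ and M₂ are two distinct minimal nontrivial normal subgroups of G, then M₂ = C_G(M₁). Consequently, G has at most two minimal nontrivial normal subgroups. -/

import Mathlib

/-- If `G` acts faithfully and primitively on `X` with `|X| ≥ 2` and `M₁ ≠ M₂` are two
distinct minimal nontrivial normal subgroups of `G`, then `M₂ = C_G(M₁)`; consequently
every minimal nontrivial normal subgroup equals `M₁` or `M₂`, so there are at most two. -/
theorem primitive_at_most_two_minimal_normals
    {G : Type*} [Group G] {X : Type*} [MulAction G X] [Nontrivial X]
    (hfaithful : ∀ g : G, (∀ x : X, g • x = x) → g = 1)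
    (htrans : ∀ x y : X, ∃ g : G, g • x = y)
    (hprim : ∀ r : Setoid X, (∀ (g : G) (x y : X), r.r x y → r.r (g • x) (g • y)) →
      (∀ x y : X, r.r x y) ∨ (∀ x y : X, r.r x y → x = y))
    (IsMinimalNormal : Subgroup G → Prop)
    (hdef : ∀ N : Subgroup G, IsMinimalNormal N ↔
      (N.Normal ∧ N ≠ ⊥ ∧ ∀ K : Subgroup G, K.Normal → K ≠ ⊥ → K ≤ N → K = N))
    (M₁ M₂ : Subgroup G) (h₁ : IsMinimalNormal M₁) (h₂ : IsMinimalNormal M₂)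
    (hne : M₁ ≠ M₂) :
    M₂ = Subgroup.centralizer (M₁ : Set G) ∧
      ∀ M₃ : Subgroup G, IsMinimalNormal M₃ → M₃ = M₁ ∨ M₃ = M₂ := by
  classical
  obtain ⟨hn₁, hbot₁, hmin₁⟩ := (hdef M₁).mp h₁
  obtain ⟨hn₂, hbot₂, hmin₂⟩ := (hdef M₂).mp h₂
  -- every nontrivial normal subgroup acts transitively
  have htransN : ∀ N : Subgroup G, N.Normal → N ≠ ⊥ → ∀ x y : X, ∃ n ∈ N, n • x = y := by
    intro N hN hNbot x y
    set r : Setoid X := ⟨fun a b => ∃ n ∈ N, n • a = b,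
      ⟨fun a => ⟨1, N.one_mem, one_smul _ _⟩,
       fun {a b} h => by
         obtain ⟨n, hn, h⟩ := h
         exact ⟨n⁻¹, N.inv_mem hn, by rw [← h, inv_smul_smul]⟩,
       fun {a b c} h h' => by
         obtain ⟨n, hn, h⟩ := h
         obtain ⟨n', hn', h'⟩ := h'
         exact ⟨n' * n, N.mul_mem hn' hn, by rw [mul_smul, h, h']⟩⟩⟩ with hr
    have hinv : ∀ (g : G) (a b : X), r.r a b → r.r (g • a) (g • b) := by
      rintro g a b ⟨n, hn, h⟩
      exact ⟨g * n * g⁻¹, hN.conj_mem n hn g, by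
        rw [mul_smul, mul_smul, inv_smul_smul, h]⟩
    rcases hprim r hinv with hall | htriv
    · exact hall x y
    · exfalso
      apply hNbot
      rw [Subgroup.eq_bot_iff_forall]
      intro n hn
      apply hfaithful
      intro z
      exact (htriv z (n • z) ⟨n, hn, rfl⟩).symm
  -- trivial intersection with M₁ for any other minimal normal subgroup
  have hint : ∀ K : Subgroup G, K.Normal → K ≠ ⊥ →
      (∀ L : Subgroup G, L.Normal → L ≠ ⊥ → L ≤ K → L = K) → K ≠ M₁ → M₁ ⊓ K = ⊥ := by
    intro K hK hKbot hKmin hKne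
    by_contra h
    have hNormal : (M₁ ⊓ K).Normal :=
      ⟨fun n hn g => ⟨hn₁.conj_mem n hn.1 g, hK.conj_mem n hn.2 g⟩⟩
    have e1 := hmin₁ (M₁ ⊓ K) hNormal h inf_le_left
    have e2 := hKmin (M₁ ⊓ K) hNormal h inf_le_right
    exact hKne (e2.symm.trans e1)
  -- elementwise commuting from trivial intersection
  have hcomm : ∀ K : Subgroup G, K.Normal → M₁ ⊓ K = ⊥ →
      ∀ a ∈ M₁, ∀ b ∈ K, a * b = b * a := by
    intro K hK hbot a ha b hb
    have hmem : a * b * a⁻¹ * b⁻¹ ∈ M₁ ⊓ K := by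
      constructor
      · have h1 : b * a⁻¹ * b⁻¹ ∈ M₁ := hn₁.conj_mem a⁻¹ (M₁.inv_mem ha) b
        have := M₁.mul_mem ha h1
        simpa [mul_assoc] using this
      · have := K.mul_mem (hK.conj_mem b hb a) (K.inv_mem hb)
        simpa [mul_assoc] using this
    rw [hbot, Subgroup.mem_bot] at hmem
    have h2 : a * b * a⁻¹ = b := by
      have := mul_eq_one_iff_eq_inv.mp hmem
      simpa using this
    calc a * b = (a * b * a⁻¹) * a := by group
      _ = b * a := by rw [h2]
  -- the centralizer acts freely
  have hfree : ∀ c ∈ Subgroup.centralizer (M₁ : Set G), ∀ x : X, c • x = x → c = 1 := by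
    intro c hc x hx
    apply hfaithful
    intro y
    obtain ⟨m, hm, hmx⟩ := htransN M₁ hn₁ hbot₁ x y
    have hcm : m * c = c * m := Subgroup.mem_centralizer_iff.mp hc m hm
    calc c • y = c • m • x := by rw [hmx]
      _ = (c * m) • x := (mul_smul _ _ _).symm
      _ = (m * c) • x := by rw [← hcm]
      _ = m • x := by rw [mul_smul, hx]
      _ = y := hmx
  -- any minimal normal K ≠ M₁ lies in the centralizer
  have hsub : ∀ K : Subgroup G, K.Normal → K ≠ ⊥ →
      (∀ L : Subgroup G, L.Normal → L ≠ ⊥ → L ≤ K → L = K) → K ≠ M₁ →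
      K ≤ Subgroup.centralizer (M₁ : Set G) := by
    intro K hK hKbot hKmin hKne b hb
    exact Subgroup.mem_centralizer_iff.mpr fun a ha =>
      hcomm K hK (hint K hK hKbot hKmin hKne) a ha b hb
  -- the centralizer is contained in M₂
  have hCle : Subgroup.centralizer (M₁ : Set G) ≤ M₂ := by
    intro c hc
    obtain ⟨x₀⟩ := (inferInstance : Nonempty X)
    obtain ⟨m, hm, hmx⟩ := htransN M₂ hn₂ hbot₂ x₀ (c • x₀)
    have hmC : m ∈ Subgroup.centralizer (M₁ : Set G) :=
      hsub M₂ hn₂ hbot₂ hmin₂ (fun h => hne h.symm) hm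
    have hmem : m⁻¹ * c ∈ Subgroup.centralizer (M₁ : Set G) :=
      Subgroup.mul_mem _ (Subgroup.inv_mem _ hmC) hc
    have hfix : (m⁻¹ * c) • x₀ = x₀ := by
      rw [mul_smul, ← hmx, inv_smul_smul]
    have h1 : m⁻¹ * c = 1 := hfree _ hmem x₀ hfix
    have hcm : m = c := inv_mul_eq_one.mp h1
    exact hcm ▸ hm
  have hCeq : M₂ = Subgroup.centralizer (M₁ : Set G) :=
    le_antisymm (hsub M₂ hn₂ hbot₂ hmin₂ (fun h => hne h.symm)) hCle
  refine ⟨hCeq, ?_⟩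
  intro M₃ h₃
  by_cases h31 : M₃ = M₁
  · exact Or.inl h31
  · obtain ⟨hn₃, hbot₃, hmin₃⟩ := (hdef M₃).mp h₃
    have hle : M₃ ≤ M₂ := le_trans (hsub M₃ hn₃ hbot₃ hmin₃ h31) hCle
    exact Or.inr (hmin₂ M₃ hn₃ hbot₃ hle)
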